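/- Let C_1, …, C_k be cycles with nonnegative weights w(C_1), …, w(C_k), and let x_{C_1}, …, x_{C_k} be strings over the DNA alphabet such that for all distinct indices i, j and every u ∈ {x_{C_i}, x̄_{C_i}^R}: ov(u, x_{C_j}) ≤ w(C_i) + (1/2)·w(C_j) and ov(u, x̄_{C_j}^R) ≤ w(C_i) + w(C_j). Let A = {x_{C_1}, …, x_{C_k}} and suppose that, after reindexing, ⟨x'_{C_1}, …, x'_{C_k}⟩ is a shortest approximate solution for the SCS-RC instance A, where each x'_{C_j} ∈ {x_{C_j}, x̄_{C_j}^R}. Then OV(A) = Σ_{j=1}^{k−1} ov(x'_{C_j}, x'_{C_{j+1}}) ≤ 1.75·Σ_{j=1}^{k} w(C_j). -/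

import Mathlib

/-- The DNA alphabet. -/
inductive DNA : Type
  | A | T | G | C
  deriving DecidableEq, Repr

/-- Complement of a DNA base: a↔t, g↔c. -/
def DNA.compl : DNA → DNA
  | .A => .T
  | .T => .A
  | .G => .C
  | .C => .G

/-- Strings over the DNA alphabet. -/
abbrev Str : Type := List DNA

/-- Reverse complement of a string. -/
def rc (s : Str) : Str := (s.map DNA.compl).reverse

/-- An approximate solution for the SCS-RC instance `S`: a string containing,
for each `s ∈ S`, either `s` or its reverse complement as a substring. -/
def ApproxSol (S : Finset Str) (u : Str) : Prop :=
  ∀ s ∈ S, s <:+: u ∨ rc s <:+: u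

/-- `OPT S` is the minimum length of an approximate solution for the SCS-RC instance `S`. -/
noncomputable def OPT (S : Finset Str) : ℕ :=
  sInf {n | ∃ u : Str, ApproxSol S u ∧ u.length = n}

/-- `S` is substring-free: no string of `S ∪ S̄^R` is a substring of another. -/
def SubstrFree (S : Finset Str) : Prop :=
  ∀ x, (x ∈ S ∨ rc x ∈ S) → ∀ y, (y ∈ S ∨ rc y ∈ S) → x ≠ y → ¬ x <:+: y

/-- `ov x y`: the length of the longest string `v` such that `x = u ++ v` and
`y = v ++ w` for nonempty `u`, `w`. -/
noncomputable def ov (x y : Str) : ℕ :=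
  sSup {k | ∃ v : Str, v.length = k ∧ (∃ u : Str, u ≠ [] ∧ x = u ++ v) ∧
        (∃ w : Str, w ≠ [] ∧ y = v ++ w)}

/-- `prefStr x y = pref(x, y)`: the prefix of `x` with respect to `y`. -/
noncomputable def prefStr (x y : Str) : Str := x.take (x.length - ov x y)

/-- `distStr x y = dist(x, y) = |x| - ov(x, y)`. -/
noncomputable def distStr (x y : Str) : ℕ := x.length - ov x y

/-- The merge `⟨x, y⟩ = pref(x, y) ++ y`. -/
noncomputable def mergeStr (x y : Str) : Str := prefStr x y ++ y

/-- `superstr [x1, …, xr] = ⟨x1, …, xr⟩ = pref(x1,x2) ⋯ pref(x_{r-1},x_r) ++ x_r`. -/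
noncomputable def superstr : List Str → Str
  | [] => []
  | [x] => x
  | x :: y :: rest => prefStr x y ++ superstr (y :: rest)

/-- `‖S‖`: the total length of the strings of the finite set `S`. -/
def normS (S : Finset Str) : ℕ := ∑ s ∈ S, s.length

/-- Pairs `(x, y)` of strings from the collection `S` or their reverse complements,
with `x = y`, or with `x ≠ y` and `rc x ≠ y`, as considered by MGREEDY-RC. -/
def ValidPair (S : Finset Str) (x y : Str) : Prop :=
  (x ∈ S ∨ rc x ∈ S) ∧ (y ∈ S ∨ rc y ∈ S) ∧ (x = y ∨ (x ≠ y ∧ rc x ≠ y))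

/-- `MGreedyExec S T`: some execution of MGREEDY-RC starting from the collection `S`
(under some tie-breaking among pairs of maximum overlap) produces the set `T`. -/
inductive MGreedyExec : Finset Str → Finset Str → Prop
  | done : MGreedyExec ∅ ∅
  | close (S T : Finset Str) (x : Str)
      (hx : x ∈ S ∨ rc x ∈ S)
      (hmax : ∀ a b, ValidPair S a b → ov a b ≤ ov x x)
      (h : MGreedyExec (S \ {x, rc x}) T) :
      MGreedyExec S (insert x T)
  | merge (S T : Finset Str) (x y : Str)
      (hx : x ∈ S ∨ rc x ∈ S) (hy : y ∈ S ∨ rc y ∈ S)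
      (hne : x ≠ y) (hrc : rc x ≠ y)
      (hmax : ∀ a b, ValidPair S a b → ov a b ≤ ov x y)
      (h : MGreedyExec (insert (mergeStr x y) (S \ {x, rc x, y, rc y})) T) :
      MGreedyExec S T

/-- `GreedyExec S u`: some execution of GREEDY-RC starting from the collection `S`
(under some tie-breaking among pairs of maximum overlap) outputs the string `u`. -/
inductive GreedyExec : Finset Str → Str → Prop
  | single (x : Str) : GreedyExec {x} x
  | merge (S : Finset Str) (u x y : Str)
      (hx : x ∈ S ∨ rc x ∈ S) (hy : y ∈ S ∨ rc y ∈ S)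
      (hne : x ≠ y) (hrc : rc x ≠ y)
      (hmax : ∀ a b, (a ∈ S ∨ rc a ∈ S) → (b ∈ S ∨ rc b ∈ S) → a ≠ b → rc a ≠ b →
        ov a b ≤ ov x y)
      (hcard : 1 < S.card)
      (h : GreedyExec (insert (mergeStr x y) (S \ {x, rc x, y, rc y})) u) :
      GreedyExec S u

/-- Reverse complement of a path: the path of the reverse complements, reversed. -/
def rcPath (p : List Str) : List Str := (p.map rc).reverse

/-- Valid pairs for the path-level description of MGREEDY-RC, where each collection
element is the path of original strings composing it, its string value being `superstr`. -/
def ValidPairP (P : Finset (List Str)) (p q : List Str) : Prop :=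
  (p ∈ P ∨ rcPath p ∈ P) ∧ (q ∈ P ∨ rcPath q ∈ P) ∧
  (superstr p = superstr q ∨ (superstr p ≠ superstr q ∧ rc (superstr p) ≠ superstr q))

/-- `MGreedyCyc P C`: the path-level description of an execution of MGREEDY-RC.
Starting from the collection of paths `P`, merging the paths `p` and `q` (adding the
edge from the last vertex of `p` to the first of `q`) when the corresponding strings
are merged, and closing the path `p` into the cycle `p` (with the edge from its last
vertex to its first) when the corresponding string is moved to `T`, some execution
produces the set of closed cycles `C`. -/
inductive MGreedyCyc : Finset (List Str) → Finset (List Str) → Prop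
  | done : MGreedyCyc ∅ ∅
  | close (P C : Finset (List Str)) (p : List Str)
      (hp : p ∈ P ∨ rcPath p ∈ P)
      (hmax : ∀ q₁ q₂, ValidPairP P q₁ q₂ →
        ov (superstr q₁) (superstr q₂) ≤ ov (superstr p) (superstr p))
      (h : MGreedyCyc (P \ {p, rcPath p}) C) :
      MGreedyCyc P (insert p C)
  | merge (P C : Finset (List Str)) (p q : List Str)
      (hp : p ∈ P ∨ rcPath p ∈ P) (hq : q ∈ P ∨ rcPath q ∈ P)
      (hne : superstr p ≠ superstr q) (hrc : rc (superstr p) ≠ superstr q)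
      (hmax : ∀ q₁ q₂, ValidPairP P q₁ q₂ →
        ov (superstr q₁) (superstr q₂) ≤ ov (superstr p) (superstr q))
      (h : MGreedyCyc (insert (p ++ q) (P \ {p, rcPath p, q, rcPath q})) C) :
      MGreedyCyc P C

/-- The weight of the cycle `x1, …, xr, x1` given by the list `[x1, …, xr]`:
`Σ_{i=1}^{r} dist(x_i, x_{i+1})` with indices modulo `r`. -/
noncomputable def cycleWeight (c : List Str) : ℕ :=
  ((c.zip (c.rotate 1)).map fun p => distStr p.1 p.2).sum

/-- `C` is a cycle cover of the distance graph `G_S`: a set of vertex-disjoint cycles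
on vertices of `S ∪ S̄^R` such that for each `s ∈ S` exactly one of `s` and `rc s`
is contained in the cycles. -/
def IsCycleCover (S : Finset Str) (C : Finset (List Str)) : Prop :=
  (∀ c ∈ C, c ≠ []) ∧
  (∀ c ∈ C, c.Nodup) ∧
  (∀ c ∈ C, ∀ d ∈ C, c ≠ d → ∀ x ∈ c, x ∉ d) ∧
  (∀ c ∈ C, ∀ x ∈ c, x ∈ S ∨ rc x ∈ S) ∧
  (∀ s ∈ S, Xor' (∃ c ∈ C, s ∈ c) (∃ c ∈ C, rc s ∈ c))

/-- The total weight of a cycle cover. -/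
noncomputable def coverWeight (C : Finset (List Str)) : ℕ := ∑ c ∈ C, cycleWeight c

/-- `minCoverWeight S = w(CYC(G_S))`: the minimum total weight of a cycle cover of `G_S`. -/
noncomputable def minCoverWeight (S : Finset Str) : ℕ :=
  sInf {n | ∃ C : Finset (List Str), IsCycleCover S C ∧ coverWeight C = n}

/-- `x` is a factor of `s`: `s = x^i ++ y` for some `i ≥ 1` and some prefix `y` of `x`. -/
def IsFactor (x s : Str) : Prop :=
  x ≠ [] ∧ ∃ i : ℕ, 1 ≤ i ∧ ∃ y : Str, y <+: x ∧ s = (List.replicate i x).flatten ++ y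

/-- `period s`: the length of the shortest factor of `s`. -/
noncomputable def periodStr (s : Str) : ℕ :=
  sInf {k | ∃ x : Str, IsFactor x s ∧ x.length = k}

open Classical in
/-- `factorStr s`: a shortest factor of `s`. -/
noncomputable def factorStr (s : Str) : Str :=
  if h : ∃ x : Str, IsFactor x s ∧ x.length = periodStr s then h.choose else []

/-- Two strings are equivalent if the factor of one is a cyclic shift of the factor
of the other. -/
def EquivStr (x y : Str) : Prop :=
  ∃ e f : Str, factorStr x = e ++ f ∧ factorStr y = f ++ e

/-!
Charge each overlap `ov(x'_p, x'_{p+1})` of the merge partly to cycle `p` and partly to cycle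
`p + 1`. A cycle used in its forward orientation pays at most `w` for its outgoing overlap and
`3/4 · w` for its incoming one; a reversed cycle pays `3/4 · w` and `w`. The four orientation
cases check against the hypotheses: the only delicate one, a reversed string followed by a
forward one, is bounded by the average of the two estimates `ov(x̄_p^R, x_q) ≤ w_p + w_q/2`
and `ov(x̄_q^R, x_p) ≤ w_q + w_p/2`, which agree by reverse-complement symmetry of `ov`.
Each cycle pays at most once on each side, so `OV(A) ≤ (1 + 3/4) Σ_j w(C_j)`.
-/

lemma DNA.compl_compl (b : DNA) : b.compl.compl = b := by
  cases b <;> rfl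

lemma rc_rc (s : Str) : rc (rc s) = s := by
  simp [rc, Function.comp_def, DNA.compl_compl]

lemma rc_append (s t : Str) : rc (s ++ t) = rc t ++ rc s := by
  simp [rc]

lemma rc_length (s : Str) : (rc s).length = s.length := by
  simp [rc]

lemma rc_ne_nil {s : Str} (hs : s ≠ []) : rc s ≠ [] := by
  simpa [rc] using hs

lemma ov_rc_rc (a b : Str) : ov (rc b) (rc a) = ov a b := by
  have overlaps_subset : ∀ a b : Str,
      {k | ∃ v : Str, v.length = k ∧ (∃ u : Str, u ≠ [] ∧ a = u ++ v) ∧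
        (∃ t : Str, t ≠ [] ∧ b = v ++ t)} ⊆
      {k | ∃ v : Str, v.length = k ∧ (∃ u : Str, u ≠ [] ∧ rc b = u ++ v) ∧
        (∃ t : Str, t ≠ [] ∧ rc a = v ++ t)} := by
    rintro a b _ ⟨v, rfl, ⟨u, hu, rfl⟩, ⟨t, ht, rfl⟩⟩
    exact ⟨rc v, rc_length v, ⟨rc t, rc_ne_nil ht, rc_append v t⟩,
      ⟨rc u, rc_ne_nil hu, rc_append u v⟩⟩
  unfold ov
  congr 1
  exact (Set.Subset.antisymm (by simpa only [rc_rc] using overlaps_subset (rc b) (rc a))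
    (overlaps_subset a b))

lemma List.zip_ofFn_tail {α : Type*} {n : ℕ} (f : Fin (n + 1) → α) :
    (List.ofFn f).zip (List.ofFn f).tail = List.ofFn fun i : Fin n => (f i.castSucc, f i.succ) := by
  apply List.ext_getElem <;> simp [-List.ofFn_succ]

lemma Fin.sum_le_sum_add_of_le_castSucc_add_succ {n : ℕ} {c : Fin n → ℝ} {a b : Fin (n + 1) → ℝ}
    (ha : ∀ j, 0 ≤ a j) (hb : ∀ j, 0 ≤ b j) (h : ∀ i, c i ≤ a i.castSucc + b i.succ) :
    ∑ i, c i ≤ ∑ j, (a j + b j) :=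
  calc ∑ i, c i ≤ ∑ i : Fin n, (a i.castSucc + b i.succ) := Finset.sum_le_sum fun i _ => h i
    _ = ∑ j, a j - a (Fin.last n) + (∑ j, b j - b 0) := by
      rw [Finset.sum_add_distrib, Fin.sum_univ_castSucc a, Fin.sum_univ_succ b]
      ring
    _ ≤ ∑ j, (a j + b j) := by
      rw [Finset.sum_add_distrib]
      linarith [ha (Fin.last n), hb 0]

def OverlapBounded (a b : Str) (wa wb : ℝ) : Prop :=
  ∀ u : Str, (u = a ∨ u = rc a) → (ov u b : ℝ) ≤ wa + wb / 2 ∧ (ov u (rc b) : ℝ) ≤ wa + wb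

section Shares

variable (a' a : Str) (w : ℝ)

noncomputable def outShare : ℝ := if a' = a then w else 3 / 4 * w

noncomputable def inShare : ℝ := if a' = a then 3 / 4 * w else w

lemma outShare_add_inShare : outShare a' a w + inShare a' a w = 7 / 4 * w := by
  unfold outShare inShare
  split_ifs <;> ring

variable {w}

lemma outShare_nonneg (hw : 0 ≤ w) : 0 ≤ outShare a' a w := by
  unfold outShare
  split_ifs <;> linarith

lemma inShare_nonneg (hw : 0 ≤ w) : 0 ≤ inShare a' a w := by
  unfold inShare
  split_ifs <;> linarith

end Shares

lemma ov_le_outShare_add_inShare {a b a' b' : Str} {wa wb : ℝ} (hwa : 0 ≤ wa) (hwb : 0 ≤ wb)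
    (hab : OverlapBounded a b wa wb) (hba : OverlapBounded b a wb wa)
    (ha' : a' = a ∨ a' = rc a) (hb' : b' = b ∨ b' = rc b) :
    (ov a' b' : ℝ) ≤ outShare a' a wa + inShare b' b wb := by
  unfold outShare inShare
  by_cases hfa : a' = a <;> by_cases hfb : b' = b <;> simp only [hfa, hfb, if_true, if_false]
  · linarith [(hab a (.inl rfl)).1]
  · rw [hb'.resolve_left hfb]
    exact (hab a (.inl rfl)).2
  · rw [ha'.resolve_left hfa]
    have hsymm : ov (rc a) b = ov (rc b) a := by rw [← ov_rc_rc, rc_rc]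
    have h₁ := (hab (rc a) (.inr rfl)).1
    have h₂ := (hba (rc b) (.inr rfl)).1
    rw [← hsymm] at h₂
    linarith
  · rw [ha'.resolve_left hfa, hb'.resolve_left hfb, ov_rc_rc]
    linarith [(hba b (.inl rfl)).1]

theorem ov_A_upperbound_general
    (k : ℕ) (w : Fin k → ℝ) (hw : ∀ j, 0 ≤ w j)
    (x : Fin k → Str)
    (hov : ∀ i j : Fin k, i ≠ j → ∀ u : Str, (u = x i ∨ u = rc (x i)) →
      (ov u (x j) : ℝ) ≤ w i + w j / 2 ∧ (ov u (rc (x j)) : ℝ) ≤ w i + w j)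
    (x' : Fin k → Str) (hx' : ∀ j, x' j = x j ∨ x' j = rc (x j)) :
    ((((List.ofFn x').zip (List.ofFn x').tail).map fun p => ov p.1 p.2).sum : ℝ)
      ≤ 1.75 * ∑ j, w j := by
  cases k with
  | zero => simp
  | succ n =>
    rw [List.zip_ofFn_tail, List.map_ofFn, List.sum_ofFn]
    push_cast
    calc ∑ i : Fin n, (ov (x' i.castSucc) (x' i.succ) : ℝ)
        ≤ ∑ j, (outShare (x' j) (x j) (w j) + inShare (x' j) (x j) (w j)) :=
          Fin.sum_le_sum_add_of_le_castSucc_add_succ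
            (fun j => outShare_nonneg _ _ (hw j)) (fun j => inShare_nonneg _ _ (hw j))
            fun i => ov_le_outShare_add_inShare (hw _) (hw _)
              (hov _ _ (Fin.castSucc_lt_succ (i := i)).ne) (hov _ _ (Fin.castSucc_lt_succ (i := i)).ne')
              (hx' _) (hx' _)
      _ = 1.75 * ∑ j, w j := by
        simp only [outShare_add_inShare, Finset.mul_sum]
        norm_num

/-- under the overlap bounds coming from the overlap rotation lemma and
the inequivalence of distinct cycles, the total overlap `OV(A)` along an optimal
superstring for `A` is at most `1.75·Σ_j w(C_j)`. -/
theorem ov_A_upperbound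
    (k : ℕ) (w : Fin k → ℝ) (hw : ∀ j, 0 ≤ w j)
    (x : Fin k → Str)
    (hov : ∀ i j : Fin k, i ≠ j → ∀ u : Str, (u = x i ∨ u = rc (x i)) →
      (ov u (x j) : ℝ) ≤ w i + w j / 2 ∧ (ov u (rc (x j)) : ℝ) ≤ w i + w j)
    (x' : Fin k → Str) (hx' : ∀ j, x' j = x j ∨ x' j = rc (x j))
    (happrox : ApproxSol (Finset.univ.image x) (superstr (List.ofFn x')))
    (hshort : (superstr (List.ofFn x')).length = OPT (Finset.univ.image x)) :
    ((((List.ofFn x').zip (List.ofFn x').tail).map fun p => ov p.1 p.2).sum : ℝ)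
      ≤ 1.75 * ∑ j, w j :=
  ov_A_upperbound_general k w hw x hov x' hx'
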